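/- Let γ > 0 be sufficiently small, and suppose μ*₁ ≤ μ̂₁ ≤ μ̂₂ ≤ μ*₂ with μ*₂ - μ*₁ ≥ γ and μ̂₂ - μ̂₁ ≤ γ/50. Then for all x ∈ [μ̂₁, μ̂₂], G_{μ̂}(x) > G_{μ*}(x); in particular, F(x) = G_{μ*}(x) - G_{μ̂}(x) has no zero in [μ̂₁, μ̂₂]. -/
import Mathlib


open Real

noncomputable def mixTwo (ν₁ ν₂ x : ℝ) : ℝ :=
  (1/2) * ((Real.sqrt (2 * π))⁻¹ * Real.exp (-(x - ν₁) ^ 2 / 2))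
  + (1/2) * ((Real.sqrt (2 * π))⁻¹ * Real.exp (-(x - ν₂) ^ 2 / 2))

lemma key_exp_ineq (t : ℝ) (ht : 0 < t) (ht1 : t ≤ 1) :
    1 + Real.exp (-(t / 8)) < 2 * Real.exp (-(t / 5000)) := by
  have h1 : t / 8 + 1 < Real.exp (t / 8) :=
    Real.add_one_lt_exp (by positivity)
  have hpos : (0 : ℝ) < 1 + t / 8 := by linarith
  have h2 : Real.exp (-(t / 8)) < 1 / (1 + t / 8) := by
    rw [Real.exp_neg, ← one_div]
    exact one_div_lt_one_div_of_lt hpos (by linarith)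
  have h3 : 1 / (1 + t / 8) ≤ 1 - t / 2500 := by
    rw [div_le_iff₀ hpos]
    nlinarith
  have h4 : 1 - t / 5000 ≤ Real.exp (-(t / 5000)) := by
    have := Real.add_one_le_exp (-(t / 5000)); linarith
  linarith

/-- For sufficiently small γ: if the generator means lie between well-separated
true means and are within γ/50 of each other, then the generator density
strictly dominates the true density on [μ̂₁, μ̂₂]. -/
theorem no_zero_between_collapsed_means :
    ∃ γ₀ : ℝ, 0 < γ₀ ∧
      ∀ γ μs₁ μs₂ μh₁ μh₂ : ℝ, 0 < γ → γ ≤ γ₀ →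
        μs₁ ≤ μh₁ → μh₁ ≤ μh₂ → μh₂ ≤ μs₂ →
        γ ≤ μs₂ - μs₁ → μh₂ - μh₁ ≤ γ / 50 →
        ∀ x ∈ Set.Icc μh₁ μh₂, mixTwo μs₁ μs₂ x < mixTwo μh₁ μh₂ x := by
  refine ⟨1, one_pos, ?_⟩
  intro γ μs₁ μs₂ μh₁ μh₂ hγ hγ1 h1 h2 h3 hsep hclose x hx
  obtain ⟨hx1, hx2⟩ := hx
  have hc : (0 : ℝ) < (Real.sqrt (2 * π))⁻¹ := by
    have : (0 : ℝ) < Real.sqrt (2 * π) :=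
      Real.sqrt_pos.mpr (by positivity)
    positivity
  -- lower bound for generator terms
  have hlow₁ : Real.exp (-(γ ^ 2 / 5000)) ≤ Real.exp (-(x - μh₁) ^ 2 / 2) := by
    apply Real.exp_le_exp.mpr
    nlinarith [sq_nonneg (x - μh₁)]
  have hlow₂ : Real.exp (-(γ ^ 2 / 5000)) ≤ Real.exp (-(x - μh₂) ^ 2 / 2) := by
    apply Real.exp_le_exp.mpr
    nlinarith [sq_nonneg (x - μh₂)]
  -- upper bound for true terms
  have hupper : Real.exp (-(x - μs₁) ^ 2 / 2) + Real.exp (-(x - μs₂) ^ 2 / 2)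
      ≤ 1 + Real.exp (-(γ ^ 2 / 8)) := by
    rcases le_total (x - μs₁) (μs₂ - x) with h | h
    · have hfar : γ / 2 ≤ μs₂ - x := by linarith
      have e1 : Real.exp (-(x - μs₁) ^ 2 / 2) ≤ 1 := by
        rw [show (1 : ℝ) = Real.exp 0 by simp]
        apply Real.exp_le_exp.mpr
        nlinarith [sq_nonneg (x - μs₁)]
      have e2 : Real.exp (-(x - μs₂) ^ 2 / 2) ≤ Real.exp (-(γ ^ 2 / 8)) := by
        apply Real.exp_le_exp.mpr
        nlinarith
      linarith
    · have hfar : γ / 2 ≤ x - μs₁ := by linarith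
      have e1 : Real.exp (-(x - μs₂) ^ 2 / 2) ≤ 1 := by
        rw [show (1 : ℝ) = Real.exp 0 by simp]
        apply Real.exp_le_exp.mpr
        nlinarith [sq_nonneg (x - μs₂)]
      have e2 : Real.exp (-(x - μs₁) ^ 2 / 2) ≤ Real.exp (-(γ ^ 2 / 8)) := by
        apply Real.exp_le_exp.mpr
        nlinarith
      linarith
  have hkey : 1 + Real.exp (-(γ ^ 2 / 8)) < 2 * Real.exp (-(γ ^ 2 / 5000)) :=
    key_exp_ineq (γ ^ 2) (by positivity) (by nlinarith)
  unfold mixTwo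
  nlinarith [hupper, hkey, hlow₁, hlow₂, hc]
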